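/- Let L be a finite distributive lattice, a ⋖ b a covering pair, and ε₁, ε₂ : L → ℝ≥0 probability mass functions. Define the 'meet convolution' ε⁺(j) = Σ_{k∧l=j} ε₁(k)·ε₂(l) and θ(ε) = Σ_{j : j∨a = j∨b} ε(j). Then θ(ε⁺) = θ(ε₁)·θ(ε₂). -/
import Mathlib


open Finset

noncomputable def thetaSum {L : Type*} [Lattice L] [Fintype L] [DecidableEq L]
    (a b : L) (ε : L → NNReal) : NNReal :=
  ∑ j ∈ univ.filter (fun j => j ⊔ a = j ⊔ b), ε j

noncomputable def meetConv {L : Type*} [Lattice L] [Fintype L] [DecidableEq L]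
    (ε₁ ε₂ : L → NNReal) (j : L) : NNReal :=
  ∑ p ∈ univ.filter (fun p : L × L => p.1 ⊓ p.2 = j), ε₁ p.1 * ε₂ p.2

lemma key {L : Type*} [DistribLattice L] (a b : L) (hab : a ≤ b) (j k : L) :
    (j ⊓ k) ⊔ a = (j ⊓ k) ⊔ b ↔ (j ⊔ a = j ⊔ b ∧ k ⊔ a = k ⊔ b) := by
  constructor
  · intro h
    have hb : b ≤ (j ⊓ k) ⊔ a := h ▸ le_sup_right
    constructor
    · exact le_antisymm (sup_le_sup_left hab j)
        (sup_le le_sup_left (hb.trans (sup_le_sup_right inf_le_left a)))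
    · exact le_antisymm (sup_le_sup_left hab k)
        (sup_le le_sup_left (hb.trans (sup_le_sup_right inf_le_right a)))
  · rintro ⟨h1, h2⟩
    rw [sup_inf_right, sup_inf_right, h1, h2]

theorem stmt_12 {L : Type*} [DistribLattice L] [Fintype L] [DecidableEq L]
    (a b : L) (hab : a ⋖ b) (ε₁ ε₂ : L → NNReal)
    (h₁ : ∑ j, ε₁ j = 1) (h₂ : ∑ j, ε₂ j = 1) :
    thetaSum a b (meetConv ε₁ ε₂) = thetaSum a b ε₁ * thetaSum a b ε₂ := by
  unfold thetaSum meetConv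
  rw [Finset.sum_fiberwise_eq_sum_filter univ (univ.filter (fun j : L => j ⊔ a = j ⊔ b))
      (fun p : L × L => p.1 ⊓ p.2) (fun p => ε₁ p.1 * ε₂ p.2), Finset.sum_mul_sum]
  rw [← Finset.sum_product']
  apply Finset.sum_congr
  · ext p
    simp [key a b hab.le p.1 p.2, Finset.mem_filter]
  · intros; rfl
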